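/- Let G be a group acting on a quasi-median graph X. The action is convex-minimal if and only if every G-orbit of vertices intersects every sector of X. -/

import Mathlib

open SimpleGraph

variable {V : Type*}

/-- Triangle condition of weak modularity. -/
def TriangleCond (X : SimpleGraph V) : Prop :=
  ∀ o x y : V, X.Adj x y → X.dist o x = X.dist o y →
    ∃ w : V, X.Adj w x ∧ X.Adj w y ∧ X.dist o w + 1 = X.dist o x

/-- Quadrangle condition of weak modularity. -/
def QuadCond (X : SimpleGraph V) : Prop :=
  ∀ o x y z : V, X.Adj z x → X.Adj z y → X.dist x y = 2 →
    X.dist o z = X.dist o x + 1 → X.dist o z = X.dist o y + 1 →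
    ∃ w : V, X.Adj w x ∧ X.Adj w y ∧ X.dist o w + 2 = X.dist o z

/-- No induced copy of the complete bipartite graph `K_{2,3}`. -/
def NoInducedK23 (X : SimpleGraph V) : Prop :=
  ¬ ∃ a b x y z : V, a ≠ b ∧ x ≠ y ∧ y ≠ z ∧ x ≠ z ∧
    X.Adj a x ∧ X.Adj a y ∧ X.Adj a z ∧ X.Adj b x ∧ X.Adj b y ∧ X.Adj b z ∧
    ¬ X.Adj a b ∧ ¬ X.Adj x y ∧ ¬ X.Adj y z ∧ ¬ X.Adj x z

/-- No induced copy of `K₄` minus an edge. -/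
def NoInducedK4minus (X : SimpleGraph V) : Prop :=
  ¬ ∃ a b c d : V, X.Adj a b ∧ X.Adj a c ∧ X.Adj a d ∧ X.Adj b c ∧ X.Adj b d ∧
    c ≠ d ∧ ¬ X.Adj c d

/-- A quasi-median graph: a connected weakly modular graph with no induced
`K_{2,3}` and no induced `K₄⁻`. -/
def QuasiMedian (X : SimpleGraph V) : Prop :=
  X.Connected ∧ TriangleCond X ∧ QuadCond X ∧ NoInducedK23 X ∧ NoInducedK4minus X

/-- `m` lies on a geodesic from `a` to `b`. -/
def InInterval (X : SimpleGraph V) (a m b : V) : Prop :=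
  X.dist a m + X.dist m b = X.dist a b

/-- `m` is a median of the triple `a, b, c`. -/
def IsMedianOf (X : SimpleGraph V) (m a b c : V) : Prop :=
  InInterval X a m b ∧ InInterval X b m c ∧ InInterval X a m c

/-- A median graph: connected, and every triple of vertices has a unique median. -/
def MedianGraph (X : SimpleGraph V) : Prop :=
  X.Connected ∧ ∀ a b c : V, ∃! m : V, IsMedianOf X m a b c

/-- The elementary relation on edges generating hyperplanes: two edges of a common
triangle, or opposite edges of an induced 4-cycle. -/
def EdgeRel (X : SimpleGraph V) (e f : Sym2 V) : Prop :=
  (∃ a b c : V, X.Adj a b ∧ X.Adj b c ∧ X.Adj a c ∧ e = s(a, b) ∧ f = s(b, c)) ∨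
  (∃ a b c d : V, X.Adj a b ∧ X.Adj b c ∧ X.Adj c d ∧ X.Adj d a ∧
    a ≠ c ∧ ¬ X.Adj a c ∧ b ≠ d ∧ ¬ X.Adj b d ∧ e = s(a, b) ∧ f = s(c, d))

/-- A hyperplane: an equivalence class of edges under the reflexive-transitive
closure of `EdgeRel`. -/
def IsHyperplane (X : SimpleGraph V) (J : Set (Sym2 V)) : Prop :=
  ∃ e ∈ X.edgeSet, J = {f | Relation.ReflTransGen (EdgeRel X) e f}

/-- The hyperplane `J` separates `x` and `y`. -/
def SeparatesPts (X : SimpleGraph V) (J : Set (Sym2 V)) (x y : V) : Prop :=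
  ¬ (X.deleteEdges J).Reachable x y

/-- A sector delimited by `J`: a connected component of `X` minus the edges of `J`. -/
def IsSectorOf (X : SimpleGraph V) (J : Set (Sym2 V)) (S : Set V) : Prop :=
  ∃ v : V, S = {w | (X.deleteEdges J).Reachable v w}

/-- A gated subset of vertices. -/
def IsGated (X : SimpleGraph V) (Y : Set V) : Prop :=
  Y.Nonempty ∧ ∀ x : V, ∃ y ∈ Y, ∀ z ∈ Y, X.dist x z = X.dist x y + X.dist y z

/-- The gated hull of a set of vertices. -/
def GatedHull (X : SimpleGraph V) (A : Set V) : Set V :=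
  ⋂₀ {Y : Set V | IsGated X Y ∧ A ⊆ Y}

/-- A polytope: the gated hull of a non-empty finite set of vertices. -/
def IsPolytope (X : SimpleGraph V) (P : Set V) : Prop :=
  ∃ A : Finset V, A.Nonempty ∧ P = GatedHull X (A : Set V)

/-- `HypOf X Y`: the hyperplanes separating two vertices of `Y` (the hyperplanes
crossing `Y`). -/
def HypOf (X : SimpleGraph V) (Y : Set V) : Set (Set (Sym2 V)) :=
  {J | IsHyperplane X J ∧ ∃ a ∈ Y, ∃ b ∈ Y, SeparatesPts X J a b}

/-- The hyperplanes separating `A` from `B` (placing them in two distinct sectors). -/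
def SepHyp (X : SimpleGraph V) (A B : Set V) : Set (Set (Sym2 V)) :=
  {J | IsHyperplane X J ∧ ∃ S T : Set V, IsSectorOf X J S ∧ IsSectorOf X J T ∧
    S ≠ T ∧ A ⊆ S ∧ B ⊆ T}

/-- The covering relation for polytopes: `P ⊊ Q` with no polytope strictly between. -/
def PolyCover (X : SimpleGraph V) (P Q : Set V) : Prop :=
  IsPolytope X P ∧ IsPolytope X Q ∧ P ⊂ Q ∧
    ¬ ∃ R : Set V, IsPolytope X R ∧ P ⊂ R ∧ R ⊂ Q

abbrev PolyVert (X : SimpleGraph V) := {P : Set V // IsPolytope X P}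

/-- The graph of polytopes: the covering graph of the inclusion poset of polytopes. -/
def PolyGraph (X : SimpleGraph V) : SimpleGraph (PolyVert X) where
  Adj P Q := PolyCover X P.val Q.val ∨ PolyCover X Q.val P.val
  symm := by constructor; intro P Q h; exact h.symm
  loopless := by constructor; intro P h; rcases h with h | h <;> exact (ssubset_irrefl P.val) h.2.2.1

/-- Two hyperplanes are transverse: there is an induced 4-cycle whose two pairs of
opposite edges belong respectively to the two hyperplanes. -/
def Transverse (X : SimpleGraph V) (J₁ J₂ : Set (Sym2 V)) : Prop :=
  ∃ a b c d : V, X.Adj a b ∧ X.Adj b c ∧ X.Adj c d ∧ X.Adj d a ∧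
    a ≠ c ∧ ¬ X.Adj a c ∧ b ≠ d ∧ ¬ X.Adj b d ∧
    s(a, b) ∈ J₁ ∧ s(c, d) ∈ J₁ ∧ s(b, c) ∈ J₂ ∧ s(d, a) ∈ J₂

/-- A prism: a polytope whose crossing hyperplanes are pairwise transverse (this
characterises the gated subgraphs decomposing as finite products of cliques). -/
def IsPrism (X : SimpleGraph V) (P : Set V) : Prop :=
  IsPolytope X P ∧ ∀ J₁ ∈ HypOf X P, ∀ J₂ ∈ HypOf X P, J₁ ≠ J₂ → Transverse X J₁ J₂

/-- The covering relation for prisms. -/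
def PrismCover (X : SimpleGraph V) (P Q : Set V) : Prop :=
  IsPrism X P ∧ IsPrism X Q ∧ P ⊂ Q ∧
    ¬ ∃ R : Set V, IsPrism X R ∧ P ⊂ R ∧ R ⊂ Q

abbrev PrismVert (X : SimpleGraph V) := {P : Set V // IsPrism X P}

/-- The graph of prisms. -/
def PrismGraph (X : SimpleGraph V) : SimpleGraph (PrismVert X) where
  Adj P Q := PrismCover X P.val Q.val ∨ PrismCover X Q.val P.val
  symm := by constructor; intro P Q h; exact h.symm
  loopless := by constructor; intro P h; rcases h with h | h <;> exact (ssubset_irrefl P.val) h.2.2.1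

/-- A convex set of vertices: closed under taking points on geodesics. -/
def IsConvexSet (X : SimpleGraph V) (Y : Set V) : Prop :=
  ∀ a ∈ Y, ∀ b ∈ Y, ∀ m : V, InInterval X a m b → m ∈ Y

/-- The convex hull of a set of vertices. -/
def ConvHull (X : SimpleGraph V) (A : Set V) : Set V :=
  ⋂₀ {Y : Set V | IsConvexSet X Y ∧ A ⊆ Y}

/-- The subgraph of `X` induced on `Y` (kept on the same vertex set). -/
def RestrictTo (X : SimpleGraph V) (Y : Set V) : SimpleGraph V where
  Adj a b := X.Adj a b ∧ a ∈ Y ∧ b ∈ Y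
  symm := by constructor; intro a b h; exact ⟨h.1.symm, h.2.2, h.2.1⟩
  loopless := by constructor; intro a h; exact X.irrefl h.1


/-!
Let `ab` be an edge and `C` a maximal clique containing it. In a quasi-median graph every vertex
`x` has a gate `π x` in `C`: the other vertices of `C` are exactly one step further from `x`. The
edges of the hyperplane dual to `ab` are precisely the edges whose endpoints have different gates,
so the sectors of this hyperplane are the fibres of `π`. Through a local-to-global argument in
weakly modular graphs, the gate of any vertex on a geodesic from `u` to `v` is `π u` or `π v`;
hence complements of sectors are convex, and a convex set containing `a` but not `b` misses the
sector of `b`.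

If an orbit `G • x` misses a sector `S`, then `{w | ∀ g, g • w ∉ S}` is a proper non-empty
`G`-invariant convex set. Conversely, a proper non-empty invariant convex set misses some sector,
and so do its orbits.
-/

section QuasiMedianSectors

variable {X : SimpleGraph V} {a b c m p u v w x y z : V}

theorem dist_le_add_one_of_adj (huv : X.Adj u v) (o : V) : X.dist o v ≤ X.dist o u + 1 := by
  simpa [dist_eq_one_iff_adj.2 huv] using huv.reachable.dist_triangle_right o

theorem exists_adj_dist_eq_of_dist_eq_add_one {o : V} {n : ℕ} (h : X.dist o y = n + 1) :
    ∃ z, X.Adj z y ∧ X.dist o z = n := by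
  rw [SimpleGraph.dist_comm] at h
  obtain ⟨w, hw⟩ :=
    (Reachable.of_dist_ne_zero (show X.dist y o ≠ 0 by omega)).exists_walk_length_eq_dist
  cases w with
  | nil => simp at h
  | @cons _ z _ hyz q =>
    refine ⟨z, hyz.symm, le_antisymm ?_ ?_⟩
    · have := dist_le q
      simp only [Walk.length_cons] at hw
      rw [SimpleGraph.dist_comm]; omega
    · have := dist_le_add_one_of_adj hyz.symm o
      rw [SimpleGraph.dist_comm] at h; omega

theorem dist_eq_two_of_adj_of_adj (hab : X.Adj a b) (hbc : X.Adj b c) (hac : a ≠ c)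
    (hnac : ¬ X.Adj a c) : X.dist a c = 2 := by
  have hreach : X.Reachable a c := hab.reachable.trans hbc.reachable
  have hle := hab.reachable.dist_triangle_left c
  have hpos := hreach.pos_dist_of_ne hac
  have hne1 : X.dist a c ≠ 1 := fun h => hnac (dist_eq_one_iff_adj.1 h)
  rw [dist_eq_one_iff_adj.2 hab, dist_eq_one_iff_adj.2 hbc] at hle
  omega

theorem ne_and_not_adj_of_dist_eq_two (h : X.dist u v = 2) : u ≠ v ∧ ¬ X.Adj u v :=
  ⟨by rintro rfl; simp at h, fun huv => by simp [dist_eq_one_iff_adj.2 huv] at h⟩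

theorem ne_and_not_adj_of_add_two_le {o : V} (h : X.dist o u + 2 ≤ X.dist o v) :
    u ≠ v ∧ ¬ X.Adj u v :=
  ⟨by rintro rfl; omega, fun huv => by have := dist_le_add_one_of_adj huv o; omega⟩

theorem SimpleGraph.Walk.inInterval_of_mem_support {w : X.Walk u v}
    (hw : w.length = X.dist u v) (hx : x ∈ w.support) : InInterval X u x v := by
  classical
  have hsplit := congrArg Walk.length (w.take_spec hx)
  rw [Walk.length_append] at hsplit
  have h1 := dist_le (w.takeUntil x hx)
  have h2 := dist_le (w.dropUntil x hx)
  have h3 := (w.takeUntil x hx).reachable.dist_triangle_left v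
  unfold InInterval
  omega

def IsLocallyConvex (X : SimpleGraph V) (S : Set V) : Prop :=
  ∀ u ∈ S, ∀ v ∈ S, X.dist u v = 2 → ∀ m, X.Adj u m → X.Adj m v → m ∈ S

theorem TriangleCond.exists_adj_adj_of_quadCond (htri : TriangleCond X) (hquad : QuadCond X)
    (hzy : X.Adj z y) (hpy : X.Adj p y) (hzp : z ≠ p) (hz : X.dist x z + 1 = X.dist x y)
    (hp : X.dist x p + 1 = X.dist x y) :
    ∃ w, X.Adj w z ∧ X.Adj w p ∧ X.dist x w + 2 = X.dist x y := by
  by_cases hadj : X.Adj z p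
  · obtain ⟨w, hwz, hwp, hw⟩ := htri x z p hadj (by omega)
    exact ⟨w, hwz, hwp, by omega⟩
  · exact hquad x z p y hzy.symm hpy.symm
      (dist_eq_two_of_adj_of_adj hzy hpy.symm hzp hadj) hz.symm hp.symm

theorem restrictTo_adj {S : Set V} :
    (RestrictTo X S).Adj u v ↔ X.Adj u v ∧ u ∈ S ∧ v ∈ S :=
  Iff.rfl

theorem mem_of_restrictTo_walk {S : Set V} (hx : x ∈ S) : (RestrictTo X S).Walk y x → y ∈ S
  | .nil => hx
  | .cons h _ => h.2.1

theorem restrictTo_mono {S T : Set V} (h : S ⊆ T) : RestrictTo X S ≤ RestrictTo X T :=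
  fun _ _ huv => ⟨huv.1, h huv.2.1, h huv.2.2⟩

theorem IsLocallyConvex.mem_of_adj_of_adj {S : Set V} (hc : X.Connected)
    (hS : IsLocallyConvex X S) (hw : w ∈ S) (hy : y ∈ S) (hwz : X.Adj w z) (hzy : X.Adj z y)
    (h : X.dist x w + 2 = X.dist x y) : z ∈ S := by
  refine hS w hw y hy ?_ z hwz hzy
  have h1 := hwz.reachable.dist_triangle_left y
  rw [dist_eq_one_iff_adj.2 hwz, dist_eq_one_iff_adj.2 hzy] at h1
  have h2 := hc.dist_triangle (u := x) (v := w) (w := y)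
  omega

def IntervalShortcuts (X : SimpleGraph V) (S : Set V) (x : V) (ℓ : ℕ) : Prop :=
  ∀ ⦃y m : V⦄ (w : (RestrictTo X S).Walk y x), w.length < ℓ → InInterval X x m y →
    ∃ w' : (RestrictTo X S).Walk m x, w'.length + X.dist m y ≤ w.length

section LocalToGlobal

variable {S : Set V} {ℓ : ℕ}

theorem IntervalShortcuts.exists_walk_of_adj (hc : X.Connected) (htri : TriangleCond X)
    (hquad : QuadCond X) (hS : IsLocallyConvex X S) (hx : x ∈ S)
    (hℓ : IntervalShortcuts X S x ℓ) (w : (RestrictTo X S).Walk y x) (hw : w.length ≤ ℓ)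
    (hzy : X.Adj z y) (hz : X.dist x z + 1 = X.dist x y) :
    ∃ w' : (RestrictTo X S).Walk z x, w'.length + 1 ≤ w.length := by
  cases w with
  | nil => simp at hz
  | @cons _ p _ hyp' w' =>
    have hyp : X.Adj y p := hyp'.1
    have hyS : y ∈ S := hyp'.2.1
    simp only [Walk.length_cons] at hw ⊢
    have hw' : w'.length < ℓ := by omega
    rcases hyp.diff_dist_adj (u := x) with hpx | hpx | hpx
    · -- Reroute `w` through a common neighbour `t` of `y` and `p` one step closer to `x`.
      obtain ⟨t, hty, htp, ht⟩ := htri x y p hyp hpx.symm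
      obtain ⟨wt, hwt⟩ := hℓ w' hw' (m := t) (by
        simp only [InInterval, dist_eq_one_iff_adj.2 htp]; omega)
      rw [dist_eq_one_iff_adj.2 htp] at hwt
      have hyt : (RestrictTo X S).Adj y t :=
        restrictTo_adj.2 ⟨hty.symm, hyS, mem_of_restrictTo_walk hx wt⟩
      obtain ⟨wz, hwz⟩ := hℓ (.cons hyt wt) (by simp only [Walk.length_cons]; omega) (m := z)
        (by simp only [InInterval, dist_eq_one_iff_adj.2 hzy]; omega)
      simp only [Walk.length_cons, dist_eq_one_iff_adj.2 hzy] at hwz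
      exact ⟨wz, by omega⟩
    · have hzp : X.dist z p ≤ 2 := by
        simpa [dist_eq_one_iff_adj.2 hzy, dist_eq_one_iff_adj.2 hyp] using
          hzy.reachable.dist_triangle_left p
      obtain ⟨wz, hwz⟩ := hℓ w' hw' (m := z) (by
        have := hc.dist_triangle (u := x) (v := z) (w := p)
        simp only [InInterval]; omega)
      exact ⟨wz, by omega⟩
    · by_cases hzp : z = p
      · subst hzp
        exact ⟨w', le_rfl⟩
      obtain ⟨t, htz, htp, ht⟩ := htri.exists_adj_adj_of_quadCond hquad hzy hyp.symm hzp hz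
        (by omega)
      obtain ⟨wt, hwt⟩ := hℓ w' hw' (m := t) (by
        simp only [InInterval, dist_eq_one_iff_adj.2 htp]; omega)
      have htS := mem_of_restrictTo_walk hx wt
      have hzS := hS.mem_of_adj_of_adj hc htS hyS htz hzy (by omega)
      exact ⟨Walk.cons (restrictTo_adj.2 ⟨htz.symm, hzS, htS⟩) wt, by
        simp only [Walk.length_cons, dist_eq_one_iff_adj.2 htp] at hwt ⊢; omega⟩

theorem IntervalShortcuts.succ (hc : X.Connected) (htri : TriangleCond X) (hquad : QuadCond X)
    (hS : IsLocallyConvex X S) (hx : x ∈ S) (hℓ : IntervalShortcuts X S x ℓ) :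
    IntervalShortcuts X S x (ℓ + 1) := by
  intro y m w hw hm
  by_cases hmy : m = y
  · subst hmy
    exact ⟨w, by rw [SimpleGraph.dist_self, add_zero]⟩
  obtain ⟨n, hn⟩ : ∃ n, X.dist m y = n + 1 :=
    Nat.exists_eq_add_one.2 (hc.pos_dist_of_ne hmy)
  obtain ⟨z, hzy, hz⟩ := exists_adj_dist_eq_of_dist_eq_add_one hn
  have h1 := hc.dist_triangle (u := x) (v := m) (w := z)
  have h2 := dist_le_add_one_of_adj hzy x
  unfold InInterval at hm
  obtain ⟨wz, hwz⟩ := hℓ.exists_walk_of_adj hc htri hquad hS hx w (by omega) hzy (by omega)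
  obtain ⟨wm, hwm⟩ := hℓ wz (by omega) (m := m) (by unfold InInterval; omega)
  exact ⟨wm, by omega⟩

theorem IsLocallyConvex.mem_of_inInterval (hc : X.Connected) (htri : TriangleCond X)
    (hquad : QuadCond X) (hS : IsLocallyConvex X S) (hx : x ∈ S)
    (hy : (RestrictTo X S).Reachable y x) (hm : InInterval X x m y) : m ∈ S := by
  obtain ⟨w⟩ := hy
  have hℓ : ∀ ℓ, IntervalShortcuts X S x ℓ := fun ℓ => by
    induction ℓ with
    | zero => exact fun _ _ _ h => absurd h (Nat.not_lt_zero _)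
    | succ ℓ ih => exact ih.succ hc htri hquad hS hx
  obtain ⟨w', -⟩ := hℓ (w.length + 1) w (Nat.lt_succ_self _) hm
  exact mem_of_restrictTo_walk hx w'

end LocalToGlobal

theorem exists_maximal_isClique_of_adj (hab : X.Adj a b) :
    ∃ C : Set V, Maximal X.IsClique C ∧ a ∈ C ∧ b ∈ C := by
  obtain ⟨C, hsub, hC⟩ := zorn_subset_nonempty {s : Set V | X.IsClique s}
    (fun K hK hchain _ => ⟨⋃₀ K, (isClique_sUnion hchain.directedOn).2 hK,
      fun _ => Set.subset_sUnion_of_mem⟩)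
    {a, b} (isClique_pair.2 fun _ => hab)
  exact ⟨C, hC, hsub (by simp), hsub (by simp)⟩

theorem NoInducedK4minus.adj_of_isClique {C : Set V} (hk4 : NoInducedK4minus X)
    (hC : X.IsClique C) (ha : a ∈ C) (hb : b ∈ C) (hab : a ≠ b) (hwa : X.Adj w a)
    (hwb : X.Adj w b) : ∀ c ∈ C, w ≠ c → X.Adj w c := by
  intro c hc hwc
  by_cases hca : c = a
  · exact hca ▸ hwa
  by_cases hcb : c = b
  · exact hcb ▸ hwb
  by_contra hnwc
  exact hk4 ⟨a, b, w, c, hC ha hb hab, hwa.symm, hC ha hc (Ne.symm hca), hwb.symm,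
    hC hb hc (Ne.symm hcb), hwc, hnwc⟩

theorem NoInducedK23.false_of_dist_eq_two (hk23 : NoInducedK23 X) (hab : a ≠ b)
    (hnab : ¬ X.Adj a b) (hax : X.Adj a x) (hay : X.Adj a y) (haz : X.Adj a z) (hbx : X.Adj b x)
    (hby : X.Adj b y) (hbz : X.Adj b z) (hxy : X.dist x y = 2) (hyz : X.dist y z = 2)
    (hxz : X.dist x z = 2) : False := by
  obtain ⟨hxy, hnxy⟩ := ne_and_not_adj_of_dist_eq_two hxy
  obtain ⟨hyz, hnyz⟩ := ne_and_not_adj_of_dist_eq_two hyz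
  obtain ⟨hxz, hnxz⟩ := ne_and_not_adj_of_dist_eq_two hxz
  exact hk23 ⟨a, b, x, y, z, hab, hxy, hyz, hxz, hax, hay, haz, hbx, hby, hbz, hnab, hnxy, hnyz,
    hnxz⟩

theorem dist_ne_of_maximal_isClique {C : Set V} (hc : X.Connected) (htri : TriangleCond X)
    (hk4 : NoInducedK4minus X) (hC : Maximal X.IsClique C) (ha : a ∈ C) (hb : b ∈ C)
    (hab : a ≠ b) (hmin : ∀ c ∈ C, X.dist x a ≤ X.dist x c) :
    X.dist x b ≠ X.dist x a := by
  intro heq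
  have hba : X.Adj b a := hC.prop hb ha (Ne.symm hab)
  rcases Nat.eq_zero_or_pos (X.dist x a) with h0 | hpos
  · rw [h0, hc.dist_eq_zero_iff] at heq
    exact hab (hc.dist_eq_zero_iff.1 h0 ▸ heq)
  obtain ⟨w, hwb, hwa, hw⟩ := htri x b a hba heq
  have hwC : w ∈ C := hC.mem_of_prop_insert
    (hC.prop.insert (hk4.adj_of_isClique hC.prop hb ha (Ne.symm hab) hwb hwa))
  have := hmin w hwC
  omega

/-- `π x` is the gate of `x` in `C`, i.e. `d(x, c) = d(x, π x) + d(π x, c)` for `c ∈ C`,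
written out for a clique `C` (which the definition forces `C` to be). -/
def IsCliqueGate (X : SimpleGraph V) (C : Set V) (π : V → V) : Prop :=
  ∀ x, π x ∈ C ∧ ∀ c ∈ C, c ≠ π x → X.dist x c = X.dist x (π x) + 1

theorem exists_isCliqueGate {C : Set V} (hc : X.Connected) (htri : TriangleCond X)
    (hk4 : NoInducedK4minus X) (hC : Maximal X.IsClique C) : ∃ π, IsCliqueGate X C π := by
  suffices ∀ x, ∃ g ∈ C, ∀ c ∈ C, c ≠ g → X.dist x c = X.dist x g + 1 by
    choose π hπC hπ using this
    exact ⟨π, fun x => ⟨hπC x, hπ x⟩⟩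
  intro x
  have hCne : C.Nonempty := by
    rcases C.eq_empty_or_nonempty with rfl | hne
    · exact absurd (hC.mem_of_prop_insert (by simp)) (Set.notMem_empty x)
    · exact hne
  obtain ⟨g, hgC, hmin⟩ : ∃ g ∈ C, ∀ c ∈ C, X.dist x g ≤ X.dist x c :=
    ⟨_, Function.argminOn_mem _ _ hCne, fun c hc => Function.argminOn_le _ _ hc⟩
  refine ⟨g, hgC, fun c hcC hcg => ?_⟩
  have := dist_le_add_one_of_adj (hC.prop hgC hcC (Ne.symm hcg)) x
  have := hmin c hcC
  have := dist_ne_of_maximal_isClique hc htri hk4 hC hgC hcC (Ne.symm hcg) hmin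
  omega

def hyperplaneOf (X : SimpleGraph V) (e : Sym2 V) : Set (Sym2 V) :=
  {f | Relation.ReflTransGen (EdgeRel X) e f}

theorem mem_hyperplaneOf_of_isClique {C : Set V} (hC : X.IsClique C) (ha : a ∈ C)
    (hb : b ∈ C) (hu : u ∈ C) (hv : v ∈ C) (hab : a ≠ b) (huv : u ≠ v) :
    s(u, v) ∈ hyperplaneOf X s(a, b) := by
  have hstep : ∀ {a b u}, a ∈ C → b ∈ C → u ∈ C → a ≠ b → a ≠ u →
      s(a, u) ∈ hyperplaneOf X s(a, b) := by
    intro a b u ha hb hu hab hau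
    by_cases hub : u = b
    · subst hub
      exact .refl
    · exact .single (Or.inl ⟨b, a, u, hC hb ha hab.symm, hC ha hu hau, hC hb hu (Ne.symm hub),
        Sym2.eq_swap, rfl⟩)
  by_cases hua : u = a
  · subst hua
    exact hstep ha hb hv hab huv
  · have hua' : s(u, a) ∈ hyperplaneOf X s(a, b) :=
      Sym2.eq_swap (a := a) ▸ hstep ha hb hu hab (Ne.symm hua)
    exact hua'.trans (hstep hu ha hv hua huv)

namespace IsCliqueGate

variable {C : Set V} {π : V → V}

theorem mem (hπ : IsCliqueGate X C π) (x : V) : π x ∈ C := (hπ x).1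

theorem dist_eq (hπ : IsCliqueGate X C π) (hcC : c ∈ C) (hne : c ≠ π x) :
    X.dist x c = X.dist x (π x) + 1 :=
  (hπ x).2 c hcC hne

theorem dist_le (hπ : IsCliqueGate X C π) (x : V) (hcC : c ∈ C) :
    X.dist x (π x) ≤ X.dist x c := by
  by_cases hne : c = π x
  · rw [hne]
  · rw [hπ.dist_eq hcC hne]; omega

theorem eq_of_dist_le (hπ : IsCliqueGate X C π) (hcC : c ∈ C)
    (h : X.dist x c ≤ X.dist x (π x)) : c = π x := by
  by_contra hne
  rw [hπ.dist_eq hcC hne] at h; omega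

theorem apply_of_mem (hπ : IsCliqueGate X C π) (hcC : c ∈ C) : π c = c :=
  (hπ.eq_of_dist_le hcC (by simp)).symm

theorem isClique (hπ : IsCliqueGate X C π) : X.IsClique C := fun a ha b hb hab => by
  have := hπ.dist_eq (x := a) hb (by rwa [hπ.apply_of_mem ha, ne_comm])
  rwa [hπ.apply_of_mem ha, SimpleGraph.dist_self, zero_add, dist_eq_one_iff_adj] at this

theorem dist_apply_eq_of_adj (hπ : IsCliqueGate X C π) (huv : X.Adj u v) (hne : π u ≠ π v) :
    X.dist v (π v) = X.dist u (π u) := by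
  have := hπ.dist_eq (x := u) (hπ.mem v) hne.symm
  have := hπ.dist_eq (x := v) (hπ.mem u) hne
  have hu := huv.reachable.dist_triangle_left (π v)
  have hv := huv.symm.reachable.dist_triangle_left (π u)
  rw [dist_eq_one_iff_adj.2 huv] at hu
  rw [dist_eq_one_iff_adj.2 huv.symm] at hv
  omega

theorem apply_eq_of_adj_of_dist_lt (hπ : IsCliqueGate X C π) (hzy : X.Adj z y)
    (h : X.dist z (π y) < X.dist y (π y)) : π z = π y := by
  by_contra hne
  have := hπ.dist_apply_eq_of_adj hzy hne
  have := hπ.dist_le z (hπ.mem y)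
  omega

theorem exists_adj_apply_eq {k : ℕ} (hπ : IsCliqueGate X C π) (h : X.dist x (π x) = k + 1) :
    ∃ y, X.Adj y x ∧ π y = π x ∧ X.dist y (π x) = k := by
  rw [SimpleGraph.dist_comm] at h
  obtain ⟨y, hyx, hy⟩ := exists_adj_dist_eq_of_dist_eq_add_one h
  rw [SimpleGraph.dist_comm] at h hy
  exact ⟨y, hyx, hπ.apply_eq_of_adj_of_dist_lt hyx (by omega), hy⟩

theorem dist_eq_two_of_apply_ne (hπ : IsCliqueGate X C π) (hum : X.Adj u m)
    (hne : π u ≠ π m) (hzm : X.Adj z m) (hz : X.dist z (π m) + 1 = X.dist m (π m)) :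
    X.dist u z = 2 := by
  have := hπ.dist_apply_eq_of_adj hum hne
  have := hπ.dist_eq (x := u) (hπ.mem m) hne.symm
  have := (hum.reachable.trans hzm.symm.reachable).dist_triangle_left (π m)
  have := hum.reachable.dist_triangle_left z
  have := dist_le_add_one_of_adj hzm.symm u
  rw [dist_eq_one_iff_adj.2 hum] at *
  omega

theorem exists_adj_adj_apply_eq (hquad : QuadCond X) (hπ : IsCliqueGate X C π)
    (hum : X.Adj u m) (hne : π u ≠ π m) (hzm : X.Adj z m)
    (hz : X.dist z (π m) + 1 = X.dist m (π m)) :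
    ∃ w, X.Adj w u ∧ X.Adj w z ∧ π w = π u ∧ X.dist w (π u) + 1 = X.dist u (π u) := by
  have hlevel := hπ.dist_apply_eq_of_adj hum hne
  have hπz : π z = π m := hπ.apply_eq_of_adj_of_dist_lt hzm (by omega)
  have hm := hπ.dist_eq (x := m) (hπ.mem u) hne
  have hz' := hπ.dist_eq (x := z) (hπ.mem u) (by rwa [hπz])
  rw [hπz] at hz'
  obtain ⟨w, hwu, hwz, hw⟩ := hquad (π u) u z m hum.symm hzm.symm
    (hπ.dist_eq_two_of_apply_ne hum hne hzm hz)
    (by rw [SimpleGraph.dist_comm, hm, SimpleGraph.dist_comm (u := π u), hlevel])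
    (by rw [SimpleGraph.dist_comm, hm, SimpleGraph.dist_comm (u := π u), hz']; omega)
  rw [SimpleGraph.dist_comm, SimpleGraph.dist_comm (u := π u), hm, hlevel] at hw
  exact ⟨w, hwu, hwz, hπ.apply_eq_of_adj_of_dist_lt hwu (by omega), by omega⟩

theorem apply_ne_of_triangle (hc : X.Connected) (htri : TriangleCond X)
    (hk4 : NoInducedK4minus X) (hπ : IsCliqueGate X C π) (hab : X.Adj a b) (hbc : X.Adj b c)
    (hac : X.Adj a c) (hne : π a ≠ π b) : π b ≠ π c := by
  intro hbc'
  have hb := hπ.dist_apply_eq_of_adj hab hne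
  have hc' := hπ.dist_apply_eq_of_adj hac (hbc' ▸ hne)
  have ha := hπ.dist_eq (x := a) (hπ.mem b) hne.symm
  rw [← hbc'] at hc'
  rcases Nat.eq_zero_or_pos (X.dist b (π b)) with h0 | hpos
  · have e1 := hc.dist_eq_zero_iff.1 h0
    have e2 := hc.dist_eq_zero_iff.1 (show X.dist c (π b) = 0 by omega)
    exact hbc.ne (e1.trans e2.symm)
  obtain ⟨w, hwb, hwc, hw⟩ := htri (π b) b c hbc
    (by rw [SimpleGraph.dist_comm, SimpleGraph.dist_comm (v := c)]; omega)
  have e1 : X.dist (π b) a = X.dist a (π b) := SimpleGraph.dist_comm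
  have e2 : X.dist (π b) b = X.dist b (π b) := SimpleGraph.dist_comm
  obtain ⟨hwa, hnwa⟩ := ne_and_not_adj_of_add_two_le (X := X) (o := π b) (u := w) (v := a)
    (by omega)
  exact hk4 ⟨b, c, a, w, hbc, hab.symm, hwb.symm, hac.symm, hwc.symm, hwa.symm,
    fun h => hnwa h.symm⟩

theorem exists_lower_of_dist_eq_two {k : ℕ} (hX : QuasiMedian X) (hπ : IsCliqueGate X C π)
    (hum : X.Adj u m) (hmv : X.Adj m v) (h2 : X.dist u v = 2) (huv : π u = π v)
    (hmu : π m ≠ π u) (hk : X.dist u (π u) = k + 1) :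
    ∃ u' m' v', X.Adj u' m' ∧ X.Adj m' v' ∧ X.dist u' v' = 2 ∧ π u' = π v' ∧ π m' ≠ π u' ∧
      X.dist u' (π u') = k := by
  obtain ⟨hc, htri, hquad, hk23, hk4⟩ := hX
  have hvm : π v ≠ π m := huv ▸ Ne.symm hmu
  have hm := hπ.dist_apply_eq_of_adj hum (Ne.symm hmu)
  have hv := hπ.dist_apply_eq_of_adj hmv.symm hvm
  obtain ⟨m₁, hm₁m, hπm₁, hm₁⟩ := hπ.exists_adj_apply_eq (x := m) (k := k) (by omega)
  obtain ⟨w, hwu, hwm₁, hπw, hw⟩ :=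
    hπ.exists_adj_adj_apply_eq hquad hum (Ne.symm hmu) hm₁m (by omega)
  obtain ⟨w', hw'v, hw'm₁, hπw', hw'⟩ :=
    hπ.exists_adj_adj_apply_eq hquad hmv.symm hvm hm₁m (by omega)
  have hπww' : π w = π w' := by rw [hπw, hπw', huv]
  have hπm₁w : π m₁ ≠ π w := by rw [hπm₁, hπw]; exact hmu
  have hww' : w ≠ w' := by
    rintro rfl
    have hmw := hπ.dist_eq (x := m) (hπ.mem u) (Ne.symm hmu)
    have e1 : X.dist (π u) w = X.dist w (π u) := SimpleGraph.dist_comm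
    have e2 : X.dist (π u) m = X.dist m (π u) := SimpleGraph.dist_comm
    obtain ⟨hwm, hnwm⟩ := ne_and_not_adj_of_add_two_le (X := X) (o := π u) (u := w) (v := m)
      (by omega)
    exact hk23.false_of_dist_eq_two hwm.symm (fun h => hnwm h.symm) hum.symm hmv hm₁m.symm
      hwu hw'v hwm₁ h2 (hπ.dist_eq_two_of_apply_ne hmv.symm hvm hm₁m (by omega))
      (hπ.dist_eq_two_of_apply_ne hum (Ne.symm hmu) hm₁m (by omega))
  have hnww' : ¬ X.Adj w w' := fun hadj =>
    apply_ne_of_triangle hc htri hk4 hπ hwm₁.symm hadj hw'm₁.symm hπm₁w hπww'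
  exact ⟨w, m₁, w', hwm₁, hw'm₁.symm, dist_eq_two_of_adj_of_adj hwm₁ hw'm₁.symm hww' hnww',
    hπww', hπm₁w, by rw [hπw]; omega⟩

theorem apply_eq_of_dist_eq_two_of_apply_eq (hX : QuasiMedian X) (hπ : IsCliqueGate X C π)
    (hum : X.Adj u m) (hmv : X.Adj m v) (h2 : X.dist u v = 2) (huv : π u = π v) :
    π m = π u := by
  suffices ∀ k u m v, X.Adj u m → X.Adj m v → X.dist u v = 2 → π u = π v →
      X.dist u (π u) = k → π m = π u from this _ u m v hum hmv h2 huv rfl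
  intro k
  induction k with
  | zero =>
    intro u m v hum hmv h2 huv hk
    by_contra hmu
    have hm := hπ.dist_apply_eq_of_adj hum (Ne.symm hmu)
    have hv := hπ.dist_apply_eq_of_adj hmv.symm (huv ▸ Ne.symm hmu)
    have hu := hX.1.dist_eq_zero_iff.1 hk
    have hv' := hX.1.dist_eq_zero_iff.1 (show X.dist v (π v) = 0 by omega)
    exact (ne_and_not_adj_of_dist_eq_two h2).1 (by rw [hu, hv', huv])
  | succ k ih =>
    intro u m v hum hmv h2 huv hk
    by_contra hmu
    obtain ⟨u', m', v', hum', hmv', h2', huv', hmu', hk'⟩ :=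
      hπ.exists_lower_of_dist_eq_two hX hum hmv h2 huv hmu hk
    exact hmu' (ih u' m' v' hum' hmv' h2' huv' hk')

theorem apply_eq_or_apply_eq_of_dist_eq_two (hX : QuasiMedian X) (hπ : IsCliqueGate X C π)
    (hum : X.Adj u m) (hmv : X.Adj m v) (h2 : X.dist u v = 2) : π m = π u ∨ π m = π v := by
  by_cases huv : π u = π v
  · exact Or.inl (hπ.apply_eq_of_dist_eq_two_of_apply_eq hX hum hmv h2 huv)
  by_contra! h
  obtain ⟨hmu, hmv'⟩ := h
  have hc := hX.1
  have htri := hX.2.1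
  have hk4 := hX.2.2.2.2
  have hm := hπ.dist_apply_eq_of_adj hum (Ne.symm hmu)
  have hv := hπ.dist_apply_eq_of_adj hmv hmv'
  have hmπu := hπ.dist_eq (x := m) (hπ.mem u) (Ne.symm hmu)
  have hvπu := hπ.dist_eq (x := v) (hπ.mem u) huv
  obtain ⟨z, hzm, hzv, hz⟩ := htri (π u) m v hmv
    (by rw [SimpleGraph.dist_comm, SimpleGraph.dist_comm (v := v)]; omega)
  have hzπu : X.dist z (π u) + 1 = X.dist m (π u) := by
    rwa [SimpleGraph.dist_comm (v := z), SimpleGraph.dist_comm (v := m)] at hz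
  have hmz : π m ≠ π z := apply_ne_of_triangle hc htri hk4 hπ hmv.symm hzm.symm hzv.symm
    (Ne.symm hmv')
  have hπz : π u = π z := hπ.eq_of_dist_le (hπ.mem u) (by
    rw [hπ.dist_apply_eq_of_adj hzm.symm hmz]; omega)
  obtain ⟨huv', hnuv⟩ := ne_and_not_adj_of_dist_eq_two h2
  have huz : u ≠ z := by rintro rfl; exact hnuv hzv
  have hnuz : ¬ X.Adj u z := fun huz' =>
    apply_ne_of_triangle hc htri hk4 hπ hum.symm huz' hzm.symm hmu hπz
  exact hmu (hπ.apply_eq_of_dist_eq_two_of_apply_eq hX hum hzm.symm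
    (dist_eq_two_of_adj_of_adj hum hzm.symm huz hnuz) hπz)

theorem reachable_restrictTo_fiber (hc : X.Connected) (hπ : IsCliqueGate X C π) (x : V) :
    (RestrictTo X {z | π z = π x}).Reachable x (π x) := by
  suffices ∀ k x, X.dist x (π x) = k → (RestrictTo X {z | π z = π x}).Reachable x (π x) from
    this _ x rfl
  intro k
  induction k with
  | zero =>
    intro x hx
    rw [← hc.dist_eq_zero_iff.1 hx]
  | succ k ih =>
    intro x hx
    obtain ⟨y, hyx, hπy, hy⟩ := hπ.exists_adj_apply_eq hx
    have hreach := ih y (hπy ▸ hy)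
    simp only [hπy] at hreach
    exact (restrictTo_adj.2 ⟨hyx.symm, rfl, hπy⟩ :
      (RestrictTo X {z | π z = π x}).Adj x y).reachable.trans hreach

theorem apply_eq_or_apply_eq_of_inInterval (hX : QuasiMedian X) (hπ : IsCliqueGate X C π)
    (hm : InInterval X a m b) : π m = π a ∨ π m = π b := by
  set S := {z | π z = π a ∨ π z = π b}
  have hS : IsLocallyConvex X S := by
    intro u hu v hv huv m hum hmv
    show π m = π a ∨ π m = π b
    rcases hπ.apply_eq_or_apply_eq_of_dist_eq_two hX hum hmv huv with h | h
    · rw [h]; exact hu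
    · rw [h]; exact hv
  have hfiber : ∀ x ∈ S, (RestrictTo X S).Reachable x (π x) := fun x hx =>
    (hπ.reachable_restrictTo_fiber hX.1 x).mono
      (restrictTo_mono fun z (hz : π z = π x) => show π z = π a ∨ π z = π b from hz ▸ hx)
  have hπa : π a ∈ S := Or.inl (hπ.apply_of_mem (hπ.mem a))
  have hπb : π b ∈ S := Or.inr (hπ.apply_of_mem (hπ.mem b))
  have hab : (RestrictTo X S).Reachable (π b) (π a) := by
    by_cases h : π b = π a
    · rw [h]
    · exact (restrictTo_adj.2 ⟨hπ.isClique (hπ.mem b) (hπ.mem a) h, hπb, hπa⟩).reachable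
  exact hS.mem_of_inInterval (x := a) hX.1 hX.2.1 hX.2.2.1 (Or.inl rfl)
    (((hfiber b (Or.inr rfl)).trans hab).trans (hfiber a (Or.inl rfl)).symm) hm

theorem mem_hyperplaneOf_of_apply_ne (hc : X.Connected) (hquad : QuadCond X)
    (hπ : IsCliqueGate X C π) (ha : a ∈ C) (hb : b ∈ C) (hab : a ≠ b) (huv : X.Adj u v)
    (hne : π u ≠ π v) : s(u, v) ∈ hyperplaneOf X s(a, b) := by
  suffices ∀ k u v, X.Adj u v → π u ≠ π v → X.dist u (π u) = k →
      s(u, v) ∈ hyperplaneOf X s(a, b) from this _ u v huv hne rfl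
  intro k
  induction k with
  | zero =>
    intro u v huv hne hu
    have hv := hπ.dist_apply_eq_of_adj huv hne
    rw [hu, hc.dist_eq_zero_iff] at hv
    rw [hc.dist_eq_zero_iff] at hu
    rw [hu, hv] at huv ⊢
    exact mem_hyperplaneOf_of_isClique hπ.isClique ha hb (hπ.mem u) (hπ.mem v) hab huv.ne
  | succ k ih =>
    intro u v huv hne hu
    have hv := hπ.dist_apply_eq_of_adj huv hne
    obtain ⟨v₁, hv₁v, hπv₁, hv₁⟩ := hπ.exists_adj_apply_eq (hv.trans hu)
    obtain ⟨w, hwu, hwv₁, hπw, hw⟩ :=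
      hπ.exists_adj_adj_apply_eq hquad huv hne hv₁v (by omega)
    have hwv₁' : s(v₁, w) ∈ hyperplaneOf X s(a, b) := Sym2.eq_swap (a := w) ▸
      ih w v₁ hwv₁ (by rw [hπw, hπv₁]; exact hne) (by rw [hπw]; omega)
    obtain ⟨huv₁, hnuv₁⟩ := ne_and_not_adj_of_dist_eq_two
      (hπ.dist_eq_two_of_apply_ne huv hne hv₁v (by omega))
    have hvπu := hπ.dist_eq (x := v) (hπ.mem u) hne
    have e1 : X.dist (π u) w = X.dist w (π u) := SimpleGraph.dist_comm
    have e2 : X.dist (π u) v = X.dist v (π u) := SimpleGraph.dist_comm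
    obtain ⟨hwv, hnwv⟩ := ne_and_not_adj_of_add_two_le (X := X) (o := π u) (u := w) (v := v)
      (by omega)
    exact hwv₁'.tail (Or.inr ⟨v₁, w, u, v, hwv₁.symm, hwu, huv, hv₁v.symm, huv₁.symm,
      fun h => hnuv₁ h.symm, hwv, hnwv, rfl, rfl⟩)

theorem not_isDiag_of_mem_hyperplaneOf (hX : QuasiMedian X) (hπ : IsCliqueGate X C π)
    (ha : a ∈ C) (hb : b ∈ C) (hab : a ≠ b) {f : Sym2 V} (hf : f ∈ hyperplaneOf X s(a, b)) :
    ¬ (f.map π).IsDiag := by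
  induction hf with
  | refl => simpa [hπ.apply_of_mem ha, hπ.apply_of_mem hb] using hab
  | tail _ hstep ih =>
    rcases hstep with ⟨x, y, z, hxy, hyz, hxz, rfl, rfl⟩ |
      ⟨x, y, z, t, hxy, hyz, hzt, htx, hxz, hnxz, hyt, hnyt, rfl, rfl⟩
    · simp only [Sym2.map_mk, Sym2.mk_isDiag_iff] at ih ⊢
      exact apply_ne_of_triangle hX.1 hX.2.1 hX.2.2.2.2 hπ hxy hyz hxz ih
    · simp only [Sym2.map_mk, Sym2.mk_isDiag_iff] at ih ⊢
      have hy := hπ.apply_eq_or_apply_eq_of_dist_eq_two hX hxy hyz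
        (dist_eq_two_of_adj_of_adj hxy hyz hxz hnxz)
      have hx := hπ.apply_eq_or_apply_eq_of_dist_eq_two hX hxy.symm htx.symm
        (dist_eq_two_of_adj_of_adj hxy.symm htx.symm hyt hnyt)
      rcases hy with hy | hy
      · exact absurd hy.symm ih
      rcases hx with hx | hx
      · exact absurd hx ih
      rw [← hy, ← hx]
      exact fun h => ih h.symm

theorem reachable_deleteEdges_iff (hX : QuasiMedian X) (hπ : IsCliqueGate X C π)
    (ha : a ∈ C) (hb : b ∈ C) (hab : a ≠ b) :
    (X.deleteEdges (hyperplaneOf X s(a, b))).Reachable u v ↔ π u = π v := by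
  constructor
  · rintro ⟨w⟩
    induction w with
    | nil => rfl
    | cons h _ ih =>
      rw [deleteEdges_adj] at h
      rw [← ih]
      by_contra hne
      exact h.2 (hπ.mem_hyperplaneOf_of_apply_ne hX.1 hX.2.2.1 ha hb hab h.1 hne)
  · intro huv
    obtain ⟨w, hw⟩ := hX.1.exists_walk_length_eq_dist u v
    have hsupp : ∀ x ∈ w.support, π x = π v := fun x hx => by
      rcases hπ.apply_eq_or_apply_eq_of_inInterval hX (w.inInterval_of_mem_support hw hx) with
        h | h
      · rw [h, huv]
      · exact h
    refine ⟨w.toDeleteEdges _ fun e he hJ => ?_⟩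
    induction e using Sym2.ind with
    | _ x y =>
    refine hπ.not_isDiag_of_mem_hyperplaneOf hX ha hb hab hJ ?_
    simp [hsupp x (w.fst_mem_support_of_mem_edges he), hsupp y (w.snd_mem_support_of_mem_edges he)]

end IsCliqueGate

theorem exists_isCliqueGate_of_adj (hX : QuasiMedian X) (hab : X.Adj a b) :
    ∃ (C : Set V) (π : V → V), a ∈ C ∧ b ∈ C ∧ IsCliqueGate X C π := by
  obtain ⟨C, hC, ha, hb⟩ := exists_maximal_isClique_of_adj hab
  obtain ⟨π, hπ⟩ := exists_isCliqueGate hX.1 hX.2.1 hX.2.2.2.2 hC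
  exact ⟨C, π, ha, hb, hπ⟩

theorem isConvexSet_compl_of_isSectorOf {J : Set (Sym2 V)} {S : Set V} (hX : QuasiMedian X)
    (hJ : IsHyperplane X J) (hS : IsSectorOf X J S) : IsConvexSet X Sᶜ := by
  obtain ⟨e, he, rfl⟩ := hJ
  obtain ⟨v₀, rfl⟩ := hS
  induction e using Sym2.ind with
  | _ a b =>
  obtain ⟨C, π, ha, hb, hπ⟩ := exists_isCliqueGate_of_adj hX ((mem_edgeSet X).1 he)
  have hsector := fun w => hπ.reachable_deleteEdges_iff hX ha hb (u := v₀) (v := w)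
    ((mem_edgeSet X).1 he).ne
  intro x hx y hy m hm hmS
  rcases hπ.apply_eq_or_apply_eq_of_inInterval hX hm with h | h
  · exact hx ((hsector x).2 (((hsector m).1 hmS).trans h))
  · exact hy ((hsector y).2 (((hsector m).1 hmS).trans h))

theorem exists_isSectorOf_disjoint {Y : Set V} (hX : QuasiMedian X) (hY : IsConvexSet X Y)
    (hYne : Y.Nonempty) (hYuniv : Y ≠ Set.univ) :
    ∃ J S, IsHyperplane X J ∧ IsSectorOf X J S ∧ Disjoint Y S := by
  obtain ⟨y₀, hy₀⟩ := hYne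
  obtain ⟨v, hv⟩ := (Set.ne_univ_iff_exists_notMem Y).1 hYuniv
  obtain ⟨d, -, ha, hb⟩ := (hX.1.preconnected y₀ v).some.exists_boundary_dart Y hy₀ hv
  obtain ⟨C, π, haC, hbC, hπ⟩ := exists_isCliqueGate_of_adj hX d.adj
  refine ⟨_, _, ⟨s(d.fst, d.snd), (mem_edgeSet X).2 d.adj, rfl⟩, ⟨d.snd, rfl⟩,
    Set.disjoint_left.2 fun y hy hyS => hb (hY y hy d.fst ha d.snd ?_)⟩
  -- `y` lies in the fibre of `b = d.snd`, so `b` is on a geodesic from `y` to `a = d.fst`.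
  have hπy : π y = d.snd := by
    rw [← (hπ.reachable_deleteEdges_iff hX haC hbC d.adj.ne).1 hyS, hπ.apply_of_mem hbC]
  have := hπ.dist_eq (x := y) haC (hπy ▸ d.adj.ne)
  rw [hπy] at this
  unfold InInterval
  rw [this, dist_eq_one_iff_adj.2 d.adj.symm]

section GroupAction

variable {G : Type*} [Group G] [MulAction G V]

theorem SimpleGraph.Connected.dist_smul (hc : X.Connected)
    (hact : ∀ (g : G) (a b : V), X.Adj (g • a) (g • b) ↔ X.Adj a b) (g : G) (u v : V) :
    X.dist (g • u) (g • v) = X.dist u v := by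
  have hle : ∀ (g : G) u v, X.dist (g • u) (g • v) ≤ X.dist u v := fun g u v => by
    obtain ⟨w, hw⟩ := hc.exists_walk_length_eq_dist u v
    rw [← hw, ← Walk.length_map (⟨(g • ·), (hact g _ _).2⟩ : X →g X)]
    exact dist_le _
  refine le_antisymm (hle g u v) ?_
  simpa using hle g⁻¹ (g • u) (g • v)

theorem isConvexSet_setOf_forall_smul_mem {K : Set V} (hc : X.Connected)
    (hact : ∀ (g : G) (a b : V), X.Adj (g • a) (g • b) ↔ X.Adj a b) (hK : IsConvexSet X K) :
    IsConvexSet X {w | ∀ g : G, g • w ∈ K} := by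
  intro a ha b hb m hm g
  refine hK _ (ha g) _ (hb g) _ ?_
  unfold InInterval at hm ⊢
  rwa [hc.dist_smul hact, hc.dist_smul hact, hc.dist_smul hact]

theorem image_smul_setOf_forall_smul_mem (K : Set V) (g : G) :
    (fun v => g • v) '' {w | ∀ h : G, h • w ∈ K} = {w | ∀ h : G, h • w ∈ K} := by
  ext w
  constructor
  · rintro ⟨w, hw, rfl⟩ h
    simpa [smul_smul] using hw (h * g)
  · intro hw
    exact ⟨g⁻¹ • w, fun h => by simpa [smul_smul] using hw (h * g⁻¹), smul_inv_smul g w⟩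

end GroupAction

end QuasiMedianSectors

/-- An action of `G` on a quasi-median graph is convex-minimal iff every orbit of
vertices intersects every sector. -/
theorem stmt16 {G : Type*} [Group G] [MulAction G V] (X : SimpleGraph V)
    (hX : QuasiMedian X)
    (hact : ∀ (g : G) (a b : V), X.Adj (g • a) (g • b) ↔ X.Adj a b) :
    (∀ Y : Set V, Y.Nonempty → (∀ g : G, (fun v => g • v) '' Y = Y) →
        IsConvexSet X Y → Y = Set.univ) ↔
      ∀ (x : V) (J : Set (Sym2 V)) (S : Set V), IsHyperplane X J →
        IsSectorOf X J S → ∃ g : G, g • x ∈ S := by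
  constructor
  · intro hmin x J S hJ hS
    by_contra! hmiss
    have hconv := isConvexSet_setOf_forall_smul_mem (G := G) hX.1 hact
      (isConvexSet_compl_of_isSectorOf hX hJ hS)
    have huniv := hmin {w | ∀ g : G, g • w ∈ Sᶜ} ⟨x, hmiss⟩
      (image_smul_setOf_forall_smul_mem _) hconv
    obtain ⟨v, rfl⟩ := hS
    have hv : v ∈ {w | ∀ g : G, g • w ∈ _} := huniv ▸ Set.mem_univ v
    exact hv 1 (by rw [one_smul]; exact Reachable.refl v)
  · intro hsec Y hYne hYinv hYconv
    by_contra hYuniv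
    obtain ⟨J, S, hJ, hS, hYS⟩ := exists_isSectorOf_disjoint hX hYconv hYne hYuniv
    obtain ⟨y, hy⟩ := hYne
    obtain ⟨g, hg⟩ := hsec y J S hJ hS
    exact Set.disjoint_left.1 hYS (hYinv g ▸ ⟨y, hy, rfl⟩) hg
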